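/- arXiv:2309.11985 — 2 statements merged into one kernel-verified Lean document; each statement's English description precedes it below -/
import Mathlib

section
/- Under the assumptions that a is coercive with constant c, that ‖g − P_H g‖_{L^2} ≤ C H ‖g‖_{H^1} for all g ∈ H^1_0(D), and that ‖f − P_H f‖_{L^2} ≤ C H^2 ‖f‖_{H^2} for f ∈ H^2(D) ∩ H^1_0(D), the Galerkin-type approximation u_H = A^{-1}(P_H f) of u = A^{-1} f satisfies ‖u − u_H‖_{H^1(D)} ≲ H^3 ‖f‖_{H^2(D)}. -/
open scoped InnerProductSpace

/-- Superconvergence of the ideal OD approximation: under coercivity of `a` and the first-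
and second-order `L²` approximation properties of the `L²`-projection `P = P_H`, the
approximation `u_H = A⁻¹(P_H f)` of `u = A⁻¹ f` satisfies
`‖u − u_H‖_{H¹} ≤ (C²/c) H³ ‖f‖_{H²}`.  `V` models `H¹₀(D)` with the `L²(D)`
inner product, `nH1`, `nH2` are the `H¹`- and `H²`-norms. -/
theorem stmt1
    {V : Type*} [NormedAddCommGroup V] [InnerProductSpace ℂ V] -- H¹₀(D) with L² inner product
    (nH1 nH2 : V → ℝ)
    (a : V → V → ℂ)
    (ha_sub : ∀ u v w : V, a (u - v) w = a u w - a v w)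
    (c C H : ℝ) (hc : 0 < c) (hC : 0 < C) (hH : 0 < H)
    (hcoer : ∀ v : V, c * nH1 v ^ 2 ≤ (a v v).re) -- coercivity of a
    (P : V → V) -- L²-orthogonal projection onto P¹_H
    (hPorth : ∀ v w : V, ⟪v - P v, P w⟫_ℂ = 0)
    (hP1 : ∀ g : V, ‖g - P g‖ ≤ C * H * nH1 g) -- first-order approximation property
    (H2cap : Set V) (f : V) (hf : f ∈ H2cap) -- f ∈ H²(D) ∩ H¹₀(D)
    (hP2 : ∀ g ∈ H2cap, ‖g - P g‖ ≤ C * H ^ 2 * nH2 g) -- second-order approximation property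
    (u uH : V)
    (hu : ∀ v : V, a u v = ⟪f, v⟫_ℂ) -- u = A⁻¹ f
    (huH : ∀ v : V, a uH v = ⟪P f, v⟫_ℂ) -- u_H = A⁻¹ (P_H f)
    : nH1 (u - uH) ≤ C ^ 2 / c * H ^ 3 * nH2 f := by
  set e := u - uH with he
  set x := nH1 e with hx
  -- nH2 f ≥ 0
  have hnH2 : 0 ≤ nH2 f := by
    have h := hP2 f hf
    nlinarith [norm_nonneg (f - P f), mul_pos hC (pow_pos hH 2)]
  -- a e e = ⟪f - P f, e⟫
  have hae : a e e = ⟪f - P f, e⟫_ℂ := by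
    rw [he, ha_sub, hu, huH, ← inner_sub_left]
  -- ⟪f - P f, e⟫ = ⟪f - P f, e - P e⟫
  have hsplit : ⟪f - P f, e - P e⟫_ℂ = ⟪f - P f, e⟫_ℂ := by
    rw [inner_sub_right, hPorth f e, sub_zero]
  have key : c * x ^ 2 ≤ (C * H ^ 2 * nH2 f) * (C * H * x) := by
    have h1 : c * x ^ 2 ≤ (a e e).re := hcoer e
    have h2 : (a e e).re ≤ ‖f - P f‖ * ‖e - P e‖ := by
      rw [hae, ← hsplit]
      calc (⟪f - P f, e - P e⟫_ℂ).re ≤ ‖⟪f - P f, e - P e⟫_ℂ‖ := Complex.re_le_norm _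
        _ ≤ ‖f - P f‖ * ‖e - P e‖ := norm_inner_le_norm _ _
    have h3 : ‖f - P f‖ ≤ C * H ^ 2 * nH2 f := hP2 f hf
    have h4 : ‖e - P e‖ ≤ C * H * x := hP1 e
    have h5 : ‖f - P f‖ * ‖e - P e‖ ≤ (C * H ^ 2 * nH2 f) * (C * H * x) := by
      apply mul_le_mul h3 h4 (norm_nonneg _)
      positivity
    linarith
  rcases le_or_gt x 0 with hx0 | hx0
  · have : 0 ≤ C ^ 2 / c * H ^ 3 * nH2 f := by positivity
    linarith
  · rw [div_mul_eq_mul_div, div_mul_eq_mul_div, le_div_iff₀ hc]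
    nlinarith [key]
end

section
/- In the setting of the modified minimisation problem, E(ũ⁰_OD) − E(u⁰_OD) ≤ (β/2)‖|ũ⁰_OD|² − P_OD(|ũ⁰_OD|²)‖²_{L^2} ≤ C H⁴ ‖ũ⁰_OD‖_{H^2}⁴, and if additionally ‖ũ⁰_OD − u⁰‖²_{H^1} ≲ E(ũ⁰_OD) − E(u⁰) and ‖ũ⁰_OD‖_{H^2} ≤ C, then ‖ũ⁰_OD − u⁰‖_{H^1} ≤ C H². -/
/-- Crude convergence estimate: in the setting of the modified minimisation problem,
`E(ũ⁰_OD) − E(u⁰_OD) ≤ (β/2)‖|ũ⁰_OD|² − P_OD(|ũ⁰_OD|²)‖²_{L²} ≤ C H⁴ ‖ũ⁰_OD‖⁴_{H²}`,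
and under the additional quadratic energy-coercivity near `u⁰` and the `H²`-boundedness
of `ũ⁰_OD`, `‖ũ⁰_OD − u⁰‖_{H¹} ≤ C'' H²`.  Here `densdiff` denotes
`‖|ũ⁰_OD|² − P_OD(|ũ⁰_OD|²)‖_{L²}` and the assumed ingredients carry constants
`C_d, C_{H²}, C_c, C_b`. -/
theorem stmt12
    {U : Type*} [AddCommGroup U] (nH1 nH2 : U → ℝ) -- H¹ and H² norms
    (E Et : U → ℝ) (β H : ℝ) (hβ : 0 ≤ β) (hH : 0 < H) (hHle : H ≤ 1)
    (u0 uOD utOD : U) -- continuous minimiser u⁰, E-minimiser u⁰_OD, Ẽ-minimiser ũ⁰_OD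
    (densdiff : ℝ) -- ‖|ũ⁰_OD|² − P_OD(|ũ⁰_OD|²)‖_{L²}
    (hdd : 0 ≤ densdiff)
    (horder : Et utOD ≤ E uOD) -- energy ordering Ẽ(ũ⁰_OD) ≤ E(u⁰_OD)
    (hEtE : E utOD - Et utOD = β / 2 * densdiff ^ 2)
      -- identity E(ũ⁰_OD) − Ẽ(ũ⁰_OD) = (β/2)‖|ũ⁰_OD|² − P_OD(|ũ⁰_OD|²)‖²
    (Cd : ℝ) (hCd : 0 < Cd)
    (hdens : densdiff ≤ Cd * H ^ 2 * nH2 utOD ^ 2) -- density projection estimate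
    (CH2 : ℝ) (hCH2 : 0 < CH2)
    (hH2bdd : nH2 utOD ≤ CH2) (hH2nonneg : 0 ≤ nH2 utOD) -- H²-boundedness of ũ⁰_OD
    (Cc : ℝ) (hCc : 0 < Cc)
    (hcoer : nH1 (utOD - u0) ^ 2 ≤ Cc * (E utOD - E u0)) -- quadratic coercivity near u⁰
    (Cb : ℝ) (hCb : 0 < Cb)
    (hbase : E uOD - E u0 ≤ Cb * H ^ 6) -- baseline estimate |E(u⁰_OD) − E(u⁰)| ≲ H⁶
    : (E utOD - E uOD ≤ β / 2 * densdiff ^ 2 ∧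
        β / 2 * densdiff ^ 2 ≤ β / 2 * Cd ^ 2 * H ^ 4 * nH2 utOD ^ 4) ∧
      nH1 (utOD - u0) ≤ Real.sqrt (Cc * (β / 2 * Cd ^ 2 * CH2 ^ 4 + Cb)) * H ^ 2 := by
  have h1 : E utOD - E uOD ≤ β / 2 * densdiff ^ 2 := by linarith
  have h2 : β / 2 * densdiff ^ 2 ≤ β / 2 * Cd ^ 2 * H ^ 4 * nH2 utOD ^ 4 := by
    have hdd2 : densdiff ^ 2 ≤ (Cd * H ^ 2 * nH2 utOD ^ 2) ^ 2 :=
      pow_le_pow_left₀ hdd hdens 2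
    nlinarith [sq_nonneg H, sq_nonneg (nH2 utOD)]
  refine ⟨⟨h1, h2⟩, ?_⟩
  have hX : 0 ≤ Cc * (β / 2 * Cd ^ 2 * CH2 ^ 4 + Cb) := by positivity
  have hn4 : nH2 utOD ^ 4 ≤ CH2 ^ 4 := pow_le_pow_left₀ hH2nonneg hH2bdd 4
  have hH6 : H ^ 6 ≤ H ^ 4 := by nlinarith [pow_le_pow_left₀ hH.le hHle 2, pow_pos hH 4]
  have hsq : nH1 (utOD - u0) ^ 2 ≤ Cc * (β / 2 * Cd ^ 2 * CH2 ^ 4 + Cb) * (H ^ 2) ^ 2 := by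
    nlinarith [pow_pos hH 4, mul_le_mul_of_nonneg_left hn4 (by positivity : (0:ℝ) ≤ β / 2 * Cd ^ 2 * H ^ 4), mul_le_mul_of_nonneg_left hH6 hCb.le]
  calc nH1 (utOD - u0) ≤ |nH1 (utOD - u0)| := le_abs_self _
    _ = Real.sqrt (nH1 (utOD - u0) ^ 2) := (Real.sqrt_sq_eq_abs _).symm
    _ ≤ Real.sqrt (Cc * (β / 2 * Cd ^ 2 * CH2 ^ 4 + Cb) * (H ^ 2) ^ 2) := Real.sqrt_le_sqrt hsq
    _ = Real.sqrt (Cc * (β / 2 * Cd ^ 2 * CH2 ^ 4 + Cb)) * H ^ 2 := by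
        rw [Real.sqrt_mul hX, Real.sqrt_sq (by positivity)]
end
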